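/- Consider the differentially private centralized averaging mechanism with Gaussian noise: for d ∈ ℝⁿ the published output is x = (1/n)Σᵢ dᵢ + ξ where ξ has law N(0,σ²), σ > 0; i.e. M_d is the Gaussian measure with mean (1/n)Σᵢ dᵢ and variance σ². Let ε ≥ 0, δ ∈ (0,1), μ > 0. If {M_d} preserves (ε,δ)-differential privacy under μ-adjacency, then κ_ε(μ/(nσ)) ≤ δ; consequently, for the unique c > 0 with κ_ε(c) = δ, one has σ ≥ μ/(nc) and E|x − d*|² = σ² ≥ μ²/(n²c²), where d* = (1/n)Σᵢ dᵢ. -/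

import Mathlib

open MeasureTheory ProbabilityTheory Filter Matrix

/-- The Laplace measure `Lap(m, b)` on `ℝ`, given by density
`x ↦ (1/(2b)) exp(−|x − m|/b)` with respect to Lebesgue measure. -/
noncomputable def laplaceMeasure (m b : ℝ) : Measure ℝ :=
  volume.withDensity fun x => ENNReal.ofReal ((1 / (2 * b)) * Real.exp (-|x - m| / b))

/-- `d` and `d'` are `μ`-adjacent: they differ in exactly one coordinate and
`‖d − d'‖₁ ≤ μ`. -/
def MuAdjacent {n : ℕ} (μ : ℝ) (d d' : Fin n → ℝ) : Prop :=
  (∃! i, d i ≠ d' i) ∧ ∑ i, |d i - d' i| ≤ μ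

/-- The family of measures `M` indexed by `d ∈ ℝⁿ` preserves `(ε,δ)`-differential
privacy under `μ`-adjacency. -/
def PreservesDP {n : ℕ} {Ω : Type*} [MeasurableSpace Ω] (μ ε δ : ℝ)
    (M : (Fin n → ℝ) → Measure Ω) : Prop :=
  ∀ d d' : Fin n → ℝ, MuAdjacent μ d d' → ∀ S : Set Ω, MeasurableSet S →
    M d S ≤ ENNReal.ofReal (Real.exp ε) * M d' S + ENNReal.ofReal δ

/-- Assumption 1: `L` is the Laplacian of an undirected connected weighted graph with
weights `w`, with `w_{ii} = 0`, `w_{ij} = w_{ji} ≥ 0`, and `∑_j w_{ij} < 1`. -/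
structure IsGraphLaplacian {n : ℕ} (L : Matrix (Fin n) (Fin n) ℝ)
    (w : Fin n → Fin n → ℝ) : Prop where
  symm : ∀ i j, w i j = w j i
  nonneg : ∀ i j, 0 ≤ w i j
  diag_zero : ∀ i, w i i = 0
  row_sum_lt_one : ∀ i, ∑ j, w i j < 1
  connected : ∀ i j : Fin n, Relation.ReflTransGen (fun a b => 0 < w a b) i j
  off_diag : ∀ i j, i ≠ j → L i j = -(w i j)
  diag : ∀ i, L i i = ∑ k, w i k

/-- Euclidean norm on `ℝⁿ` (as functions `Fin n → ℝ`). -/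
noncomputable def euclNorm {n : ℕ} (v : Fin n → ℝ) : ℝ := Real.sqrt (∑ i, v i ^ 2)

/-- The standard normal CDF `Φ`. -/
noncomputable def stdNormalCDF (s : ℝ) : ℝ :=
  (Real.sqrt (2 * Real.pi))⁻¹ * ∫ τ in Set.Iic s, Real.exp (-τ ^ 2 / 2)

/-- `κ_ε(s) = Φ(s/2 − ε/s) − e^ε Φ(−s/2 − ε/s)`. -/
noncomputable def kappaDP (ε s : ℝ) : ℝ :=
  stdNormalCDF (s / 2 - ε / s) - Real.exp ε * stdNormalCDF (-(s / 2) - ε / s)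

/-!
Feed the adjacent inputs `μ • eᵢ` and `0`, whose averages differ by `μ / n`, into the privacy
inequality on the half-line `[t, ∞)` where the likelihood ratio of the two output Gaussians
exceeds `e^ε`; the Gaussian tail probabilities turn it into `κ_ε(μ / (nσ)) ≤ δ`. The derivative
of `κ_ε` is the standard normal density at `s/2 − ε/s`, so `κ_ε` is strictly increasing on
`(0, ∞)` and `κ_ε(c) = δ` forces `c ≥ μ / (nσ)`.
-/

open Real

lemma integrable_exp_neg_sq_div_two : Integrable fun τ : ℝ => exp (-τ ^ 2 / 2) := by
  simpa [neg_div, div_eq_inv_mul] using integrable_exp_neg_mul_sq (b := (1 / 2 : ℝ)) (by norm_num)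

lemma stdNormalCDF_nonneg (s : ℝ) : 0 ≤ stdNormalCDF s :=
  mul_nonneg (by positivity) (integral_nonneg fun _ => (exp_pos _).le)

lemma hasDerivAt_stdNormalCDF (x : ℝ) : HasDerivAt stdNormalCDF (gaussianPDFReal 0 1 x) x := by
  have hsplit : ∀ s, ∫ τ in Set.Iic s, exp (-τ ^ 2 / 2)
      = (∫ τ in Set.Iic 0, exp (-τ ^ 2 / 2)) + ∫ τ in (0 : ℝ)..s, exp (-τ ^ 2 / 2) := fun s => by
    rw [← intervalIntegral.integral_Iic_sub_Iic integrable_exp_neg_sq_div_two.integrableOn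
      integrable_exp_neg_sq_div_two.integrableOn, add_sub_cancel]
  have hcont : Continuous fun τ : ℝ => exp (-τ ^ 2 / 2) := by fun_prop
  have hFTC := intervalIntegral.integral_hasDerivAt_right (a := 0) (b := x)
    integrable_exp_neg_sq_div_two.intervalIntegrable
    hcont.stronglyMeasurable.stronglyMeasurableAtFilter hcont.continuousAt
  have hΦ : stdNormalCDF = fun s => (√(2 * π))⁻¹ *
      ((∫ τ in Set.Iic 0, exp (-τ ^ 2 / 2)) + ∫ τ in (0 : ℝ)..s, exp (-τ ^ 2 / 2)) :=
    funext fun s => by rw [stdNormalCDF, hsplit]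
  rw [hΦ]
  refine ((hFTC.const_add _).const_mul _).congr_deriv ?_
  simp [gaussianPDFReal]

lemma gaussianReal_Iic_eq_stdNormalCDF (s : ℝ) :
    gaussianReal 0 1 (Set.Iic s) = ENNReal.ofReal (stdNormalCDF s) := by
  rw [gaussianReal_apply_eq_integral 0 one_ne_zero, stdNormalCDF, ← integral_const_mul]
  simp [gaussianPDFReal]

lemma gaussianReal_Ici {m σ : ℝ} (hσ : 0 < σ) (t : ℝ) :
    gaussianReal m ⟨σ ^ 2, sq_nonneg σ⟩ (Set.Ici t)
      = ENNReal.ofReal (stdNormalCDF ((m - t) / σ)) := by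
  have hmap : gaussianReal m ⟨σ ^ 2, sq_nonneg σ⟩
      = (gaussianReal 0 1).map fun x => m - σ * x := by
    rw [show (fun x => m - σ * x) = (m - ·) ∘ (σ * ·) from rfl,
      ← Measure.map_map (by fun_prop) (by fun_prop), gaussianReal_map_const_mul,
      gaussianReal_map_const_sub, mul_zero, sub_zero, mul_one]
    rfl
  have hpre : (fun x => m - σ * x) ⁻¹' Set.Ici t = Set.Iic ((m - t) / σ) := by
    ext x
    simp only [Set.mem_preimage, Set.mem_Ici, Set.mem_Iic, le_div_iff₀ hσ]
    constructor <;> intro h <;> linarith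
  rw [hmap, Measure.map_apply (by fun_prop) measurableSet_Ici, hpre,
    gaussianReal_Iic_eq_stdNormalCDF]

lemma integral_sq_abs_sub_gaussianReal (m : ℝ) (v : NNReal) :
    ∫ x, |x - m| ^ 2 ∂gaussianReal m v = v := by
  simpa [variance_eq_integral measurable_id'.aemeasurable] using
    variance_fun_id_gaussianReal (μ := m) (v := v)

lemma hasDerivAt_kappaDP (ε : ℝ) {s : ℝ} (hs : s ≠ 0) :
    HasDerivAt (kappaDP ε) (gaussianPDFReal 0 1 (s / 2 - ε / s)) s := by
  have hεs : HasDerivAt (fun u => ε / u) (-ε / s ^ 2) s :=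
    ((hasDerivAt_const s ε).div (hasDerivAt_id s) hs).congr_deriv (by simp [neg_div])
  have hplus := ((hasDerivAt_id s).div_const 2).sub hεs
  have hminus := ((hasDerivAt_id s).div_const 2).neg.sub hεs
  -- this collapses the chain-rule factors `1/2 + ε/s²` and `-1/2 + ε/s²` into `1`
  have hdensity : exp ε * gaussianPDFReal 0 1 (-(s / 2) - ε / s)
      = gaussianPDFReal 0 1 (s / 2 - ε / s) := by
    rw [gaussianPDFReal, gaussianPDFReal, mul_left_comm, ← exp_add, NNReal.coe_one]
    congr 2
    field_simp
    ring
  refine (((hasDerivAt_stdNormalCDF _).comp s hplus).sub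
    (((hasDerivAt_stdNormalCDF _).comp s hminus).const_mul (exp ε))).congr_deriv ?_
  simp only [Pi.sub_apply, Pi.neg_apply, id]
  rw [← mul_assoc, hdensity]
  ring

lemma kappaDP_strictMonoOn (ε : ℝ) : StrictMonoOn (kappaDP ε) (Set.Ioi 0) := by
  have hderiv : ∀ s ∈ Set.Ioi (0 : ℝ),
      HasDerivAt (kappaDP ε) (gaussianPDFReal 0 1 (s / 2 - ε / s)) s :=
    fun s hs => hasDerivAt_kappaDP ε (ne_of_gt hs)
  refine strictMonoOn_of_hasDerivWithinAt_pos (convex_Ioi 0)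
    (f' := fun s => gaussianPDFReal 0 1 (s / 2 - ε / s))
    (fun s hs => (hderiv s hs).continuousAt.continuousWithinAt) (fun s hs => ?_)
    (fun s _ => gaussianPDFReal_pos _ _ _ one_ne_zero)
  rw [interior_Ioi] at hs ⊢
  exact (hderiv s hs).hasDerivWithinAt

lemma kappaDP_le_of_gaussianReal_le {m m' σ ε δ : ℝ} (hσ : 0 < σ) (hδ : 0 ≤ δ) (hm : m ≠ m')
    (hDP : ∀ S, MeasurableSet S → gaussianReal m ⟨σ ^ 2, sq_nonneg σ⟩ S
      ≤ ENNReal.ofReal (exp ε) * gaussianReal m' ⟨σ ^ 2, sq_nonneg σ⟩ S + ENNReal.ofReal δ) :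
    kappaDP ε ((m - m') / σ) ≤ δ := by
  have hmm' : m - m' ≠ 0 := sub_ne_zero.mpr hm
  -- the likelihood ratio of the two Gaussians exceeds `exp ε` exactly on `[t, ∞)`
  set t := (m + m') / 2 + ε * σ ^ 2 / (m - m')
  have h := hDP (Set.Ici t) measurableSet_Ici
  rw [gaussianReal_Ici hσ, gaussianReal_Ici hσ, ← ENNReal.ofReal_mul (exp_pos ε).le,
    ← ENNReal.ofReal_add (mul_nonneg (exp_pos ε).le (stdNormalCDF_nonneg _)) hδ,
    ENNReal.ofReal_le_ofReal_iff (by positivity [stdNormalCDF_nonneg ((m' - t) / σ)])] at h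
  have hm_t : (m - t) / σ = (m - m') / σ / 2 - ε / ((m - m') / σ) := by
    simp only [t]
    field_simp
    ring
  have hm'_t : (m' - t) / σ = -((m - m') / σ / 2) - ε / ((m - m') / σ) := by
    simp only [t]
    field_simp
    ring
  rw [kappaDP, ← hm_t, ← hm'_t]
  linarith

lemma muAdjacent_single_zero {n : ℕ} {μ x : ℝ} (i : Fin n) (hx : x ≠ 0) (hxμ : |x| ≤ μ) :
    MuAdjacent μ (Pi.single i x) 0 := by
  refine ⟨⟨i, by simpa, fun j hj => ?_⟩, by simpa [Pi.single_apply, apply_ite] using hxμ⟩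
  by_contra hji
  simp [hji] at hj

theorem dpca_gaussian_tradeoff_general {n : ℕ} (hn : 0 < n)
    (σ ε δ μ : ℝ) (hσ : 0 < σ) (hδ : δ ∈ Set.Ioo (0 : ℝ) 1) (hμ : 0 < μ)
    (hDP : PreservesDP μ ε δ
      (fun d : Fin n → ℝ => gaussianReal ((∑ i, d i) / (n : ℝ)) ⟨σ ^ 2, sq_nonneg σ⟩)) :
    kappaDP ε (μ / ((n : ℝ) * σ)) ≤ δ ∧
    ∀ c : ℝ, 0 < c → kappaDP ε c = δ →
      σ ≥ μ / ((n : ℝ) * c) ∧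
      ∀ d : Fin n → ℝ,
        (∫ x : ℝ, |x - (∑ i, d i) / (n : ℝ)| ^ 2
            ∂(gaussianReal ((∑ i, d i) / (n : ℝ)) ⟨σ ^ 2, sq_nonneg σ⟩)) = σ ^ 2 ∧
        σ ^ 2 ≥ μ ^ 2 / ((n : ℝ) ^ 2 * c ^ 2) := by
  have hn' : (0 : ℝ) < n := by exact_mod_cast hn
  have hκ : kappaDP ε (μ / (n * σ)) ≤ δ := by
    have hadj := muAdjacent_single_zero ⟨0, hn⟩ hμ.ne' (abs_of_pos hμ).le
    have h := kappaDP_le_of_gaussianReal_le (m := μ / n) (m' := 0) hσ hδ.1.le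
      (div_pos hμ hn').ne' fun S hS => by simpa using hDP _ _ hadj S hS
    rwa [sub_zero, div_div] at h
  refine ⟨hκ, fun c hc hκc => ?_⟩
  have hsc : μ / (n * σ) ≤ c :=
    ((kappaDP_strictMonoOn ε).le_iff_le (show 0 < μ / (n * σ) by positivity) hc).mp (hκc ▸ hκ)
  have hσc : μ / (n * c) ≤ σ := by
    rw [div_le_iff₀ (by positivity)] at hsc ⊢
    linarith
  refine ⟨hσc, fun d => ⟨integral_sq_abs_sub_gaussianReal _ _, ?_⟩⟩
  calc μ ^ 2 / ((n : ℝ) ^ 2 * c ^ 2) = (μ / (n * c)) ^ 2 := by rw [div_pow, mul_pow]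
    _ ≤ σ ^ 2 := pow_le_pow_left₀ (by positivity) hσc 2

/-- trade-off of the DPCA algorithm under the Gaussian mechanism. -/
theorem dpca_gaussian_tradeoff {n : ℕ} (hn : 0 < n)
    (σ ε δ μ : ℝ) (hσ : 0 < σ) (hε : 0 ≤ ε) (hδ : δ ∈ Set.Ioo (0 : ℝ) 1) (hμ : 0 < μ)
    (hDP : PreservesDP μ ε δ
      (fun d : Fin n → ℝ => gaussianReal ((∑ i, d i) / (n : ℝ)) ⟨σ ^ 2, sq_nonneg σ⟩)) :
    kappaDP ε (μ / ((n : ℝ) * σ)) ≤ δ ∧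
    ∀ c : ℝ, 0 < c → kappaDP ε c = δ →
      σ ≥ μ / ((n : ℝ) * c) ∧
      ∀ d : Fin n → ℝ,
        (∫ x : ℝ, |x - (∑ i, d i) / (n : ℝ)| ^ 2
            ∂(gaussianReal ((∑ i, d i) / (n : ℝ)) ⟨σ ^ 2, sq_nonneg σ⟩)) = σ ^ 2 ∧
        σ ^ 2 ≥ μ ^ 2 / ((n : ℝ) ^ 2 * c ^ 2) :=
  dpca_gaussian_tradeoff_general hn σ ε δ μ hσ hδ hμ hDP
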